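/- Let p be an odd prime and G a finite group with p-core V and W = V^p·[V,V]. Then G is x₀-constrained if and only if the quotient group G/W is x₀-constrained. -/

import Mathlib

open scoped Pointwise

/-- The `p`-core of `G`: the intersection of all Sylow `p`-subgroups. -/
def pCore (p : ℕ) (G : Type*) [Group G] : Subgroup G :=
  ⨅ P : Sylow p G, (P : Subgroup G)

instance pCore_normal (p : ℕ) (G : Type*) [Group G] : (pCore p G).Normal := by
  constructor
  intro x hx g
  rw [pCore, Subgroup.mem_iInf] at hx ⊢
  intro P
  have h := hx (g⁻¹ • P)
  rw [Sylow.coe_subgroup_smul, Subgroup.mem_pointwise_smul_iff_inv_smul_mem] at h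
  simpa [MulAut.conj] using h

/-- `W = V^p⋅[V,V]`, the Frattini subgroup of the `p`-core `V`, as a subgroup of `G`. -/
def pFrattini (p : ℕ) (G : Type*) [Group G] : Subgroup G :=
  Subgroup.closure ((fun v => v ^ p) '' (pCore p G : Set G)) ⊔ ⁅pCore p G, pCore p G⁆

instance pFrattini_normal (p : ℕ) (G : Type*) [Group G] : (pFrattini p G).Normal := by
  have h1 : (Subgroup.closure ((fun v => v ^ p) '' (pCore p G : Set G))).Normal := by
    constructor
    intro x hx g
    induction hx using Subgroup.closure_induction'' with
    | one => simpa using Subgroup.one_mem _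
    | mem y hy =>
        obtain ⟨v, hv, rfl⟩ := hy
        refine Subgroup.subset_closure ⟨g * v * g⁻¹, (pCore_normal p G).conj_mem v hv g, ?_⟩
        simp [conj_pow]
    | inv_mem y hy =>
        obtain ⟨v, hv, rfl⟩ := hy
        have : g * (v ^ p)⁻¹ * g⁻¹ = ((g * v * g⁻¹) ^ p)⁻¹ := by
          rw [conj_pow]; group
        rw [this]
        exact Subgroup.inv_mem _ (Subgroup.subset_closure
          ⟨g * v * g⁻¹, (pCore_normal p G).conj_mem v hv g, by simp [conj_pow]⟩)
    | mul y z _ _ hy hz =>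
        have : g * (y * z) * g⁻¹ = (g * y * g⁻¹) * (g * z * g⁻¹) := by group
        rw [this]
        exact Subgroup.mul_mem _ hy hz
  have h2 : (⁅pCore p G, pCore p G⁆ : Subgroup G).Normal := Subgroup.commutator_normal _ _
  exact Subgroup.sup_normal _ _

/-- `⟨x, y⟩ = (x^{h^{p-1}} y ⋅ x^{h^{p-2}} y ⋯ x^{h} y)^{a}`. -/
def tameBracket (p : ℕ) (h a : ℤ) {G : Type*} [Group G] (x y : G) : G :=
  (((List.range (p - 1)).map fun i => x ^ (h ^ (p - 1 - i)) * y).prod) ^ a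

/-- Membership in `T_G`: the tame relation holds and the images of `σ, τ` generate `G/V`. -/
def MemTG (p : ℕ) {G : Type*} [Group G] (σ τ : G) : Prop :=
  σ⁻¹ * τ * σ = τ ^ p ∧ Subgroup.closure {σ, τ} ⊔ pCore p G = ⊤

/-- `G` is `x₀`-constrained if `x₀^σ⋅⟨x₀,τ⟩⁻¹ ∈ W` implies `x₀ ∈ W`,
for all `(σ,τ) ∈ T_G` and `x₀ ∈ V`. -/
def IsXConstrained (p : ℕ) (h a : ℤ) (G : Type*) [Group G] : Prop :=
  ∀ σ τ : G, MemTG p σ τ → ∀ x₀ ∈ pCore p G,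
    σ⁻¹ * x₀ * σ * (tameBracket p h a x₀ τ)⁻¹ ∈ pFrattini p G → x₀ ∈ pFrattini p G

/-!
Reduction modulo `W` is compatible with every ingredient of the definition: `V/W` is the `p`-core
of `G/W`, its Frattini subgroup is trivial, and `⟨·,·⟩` is a word map. The one real point is that
a pair `(σ̄, τ̄) ∈ T_{G/W}` lifts to `T_G`. The relation `σ̄⁻¹τ̄σ̄ = τ̄^p` forces `τ̄` to have order
prime to `p`, so it lifts to a `p'`-element `τ`. For any lift `σ₀` of `σ̄`, the `p'`-elements
`σ₀⁻¹τσ₀` and `τ^p` agree modulo the `p`-group `W`, hence are conjugate by some `w ∈ W`, and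
`σ = σ₀w⁻¹` does the job. That coprime conjugacy is proved by induction on `|W|` through the centre
of `W`; the abelian case is the vanishing of `H¹` for a cyclic group acting coprimely.
-/

open Finset in
theorem exists_mul_inv_map_eq_of_prod_iterate_eq_one {A : Type*} [CommGroup A] (ψ : A →* A)
    {m : ℕ} (hm : (Nat.card A).Coprime m) {u : A} (hu : ∏ i ∈ range m, ψ^[i] u = 1) :
    ∃ z, z * (ψ z)⁻¹ = u := by
  set a : ℕ → A := fun i => ∏ j ∈ range i, ψ^[j] u
  have ha_succ : ∀ i, a (i + 1) = ψ (a i) * u := fun i => by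
    simp only [a, prod_range_succ', Function.iterate_zero_apply, Function.iterate_succ_apply',
      map_prod]
  -- `b = ψ b * u ^ m`, so an `m`-th root of `b` is the required witness.
  set b := ∏ i ∈ range m, a i
  have hshift : ∏ i ∈ range m, a (i + 1) = b := by
    have h := (prod_range_succ' a m).symm.trans (prod_range_succ a m)
    rwa [show a 0 = 1 from prod_range_zero _, show a m = 1 from hu, mul_one, mul_one] at h
  have hb : b = ψ b * u ^ m := by
    conv_lhs => rw [← hshift]
    simp only [ha_succ, prod_mul_distrib, prod_const, card_range, ← map_prod]
    rfl
  obtain ⟨c, hc⟩ := hm.pow_left_bijective.surjective b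
  refine ⟨c, hm.pow_left_bijective.injective ?_⟩
  rw [mul_pow, inv_pow, ← map_pow, show c ^ m = b from hc, mul_inv_eq_iff_eq_mul, mul_comm]
  exact hb

open Finset in
open scoped IsMulCommutative in
theorem exists_conj_eq_of_mul_inv_mem_of_isMulCommutative {G : Type*} [Group G] {A : Subgroup G}
    [A.Normal] [IsMulCommutative A] {m : ℕ} (hm : (Nat.card A).Coprime m) {s t : G}
    (hst : s * t⁻¹ ∈ A) (ht : t ^ m = 1) (hs : s ^ m = 1) : ∃ z ∈ A, z * t * z⁻¹ = s := by
  set ψ : A →* A := (MulAut.conjNormal t : A ≃* A).toMonoidHom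
  have hψ : ∀ i (x : A), ((ψ^[i] x : A) : G) = t ^ i * x * (t ^ i)⁻¹ := by
    intro i x
    induction i with
    | zero => simp
    | succ i ih =>
      rw [Function.iterate_succ_apply']
      simp only [ψ, MulEquiv.coe_toMonoidHom, MulAut.conjNormal_apply] at ih ⊢
      rw [ih]
      group
  set u : A := ⟨s * t⁻¹, hst⟩
  have hnorm : ∀ i, ((∏ j ∈ range i, ψ^[j] u : A) : G) * t ^ i = s ^ i := by
    intro i
    induction i with
    | zero => simp
    | succ i ih =>
      rw [prod_range_succ, Subgroup.coe_mul, hψ, pow_succ s, ← ih]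
      simp only [u]
      group
  obtain ⟨z, hz⟩ := exists_mul_inv_map_eq_of_prod_iterate_eq_one ψ hm
    (Subtype.ext (by simpa [ht, hs] using hnorm m))
  have hz' : (z : G) * (t * z * t⁻¹)⁻¹ = s * t⁻¹ := congrArg Subtype.val hz
  refine ⟨z, z.2, ?_⟩
  calc (z : G) * t * (z : G)⁻¹ = (z : G) * (t * z * t⁻¹)⁻¹ * t := by group
    _ = s := by rw [hz']; group

theorem Subgroup.card_map_mk'_lt {G : Type*} [Group G] [Finite G] {W Z : Subgroup G} [Z.Normal]
    (hZW : Z ≤ W) (hZ : Z ≠ ⊥) : Nat.card (W.map (QuotientGroup.mk' Z)) < Nat.card W := by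
  have hcard : Nat.card Z * Nat.card (W.map (QuotientGroup.mk' Z)) = Nat.card W := by
    rw [← Subgroup.relIndex_ker (K := W), QuotientGroup.ker_mk', ← Subgroup.relIndex_bot_left,
      ← Subgroup.relIndex_bot_left, Subgroup.relIndex_mul_relIndex _ _ _ bot_le hZW]
  have := (Subgroup.one_lt_card_iff_ne_bot Z).2 hZ
  have := Nat.card_pos (α := W.map (QuotientGroup.mk' Z))
  nlinarith

theorem IsPGroup.exists_conj_eq_of_mul_inv_mem {p : ℕ} [hp : Fact p.Prime] {G : Type*} [Group G]
    [Finite G] {W : Subgroup G} [W.Normal] (hW : IsPGroup p W) {s t : G} (hst : s * t⁻¹ ∈ W)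
    (ht : ¬ p ∣ orderOf t) (hs : ¬ p ∣ orderOf s) : ∃ w ∈ W, w * t * w⁻¹ = s := by
  induction hn : Nat.card W using Nat.strong_induction_on generalizing G with
  | _ n ih =>
  rcases W.bot_or_nontrivial with rfl | hWnt
  · exact ⟨1, Subgroup.one_mem _, by simpa [mul_inv_eq_one, eq_comm] using hst⟩
  set Z : Subgroup G := (Subgroup.center W).map W.subtype
  have hZW : Z ≤ W := Subgroup.map_subtype_le _
  have hZ_ne_bot : Z ≠ ⊥ := by
    rw [Ne, Subgroup.map_eq_bot_iff_of_injective _ W.subtype_injective]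
    exact (Subgroup.nontrivial_iff_ne_bot _).1 hW.center_nontrivial
  set f := QuotientGroup.mk' Z
  obtain ⟨_, ⟨w, hw, rfl⟩, hwts⟩ := ih _ (hn ▸ Subgroup.card_map_mk'_lt hZW hZ_ne_bot)
    (hW.map f) (s := f s) (t := f t) (by simpa using Subgroup.mem_map_of_mem f hst)
    (fun h => ht (h.trans (orderOf_map_dvd f t)))
    (fun h => hs (h.trans (orderOf_map_dvd f s))) rfl
  have hZ_conj : s * (w * t * w⁻¹)⁻¹ ∈ Z := by
    rw [← QuotientGroup.eq_one_iff]
    change f _ = 1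
    rw [map_mul, map_inv, map_mul, map_mul, map_inv, hwts, mul_inv_cancel]
  set m := orderOf t * orderOf s
  have hm : (Nat.card Z).Coprime m := by
    obtain ⟨k, hk⟩ := (hW.to_le hZW).exists_card_eq
    rw [hk]
    exact .pow_left k (.mul_right (hp.out.coprime_iff_not_dvd.2 ht)
      (hp.out.coprime_iff_not_dvd.2 hs))
  obtain ⟨z, hz, hzts⟩ := exists_conj_eq_of_mul_inv_mem_of_isMulCommutative hm hZ_conj
    (by rw [conj_pow, pow_mul, pow_orderOf_eq_one, one_pow, mul_one, mul_inv_cancel])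
    (by rw [pow_mul', pow_orderOf_eq_one, one_pow])
  exact ⟨z * w, W.mul_mem (hZW hz) hw, by rw [← hzts]; group⟩

theorem orderOf_inv_mul_mul {G : Type*} [Group G] (σ τ : G) :
    orderOf (σ⁻¹ * τ * σ) = orderOf τ :=
  (SemiconjBy.orderOf_eq σ⁻¹ (by simp [SemiconjBy, mul_assoc])).symm

theorem not_dvd_orderOf_of_inv_mul_mul_eq_pow {p : ℕ} [hp : Fact p.Prime] {G : Type*} [Group G]
    [Finite G] {σ τ : G} (hrel : σ⁻¹ * τ * σ = τ ^ p) : ¬ p ∣ orderOf τ := by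
  have hconj : orderOf (τ ^ p) = orderOf τ := by rw [← hrel, orderOf_inv_mul_mul]
  intro hdvd
  rw [orderOf_pow_of_dvd hp.out.ne_zero hdvd] at hconj
  exact (Nat.div_lt_self (orderOf_pos τ) hp.out.one_lt).ne hconj

theorem exists_apply_eq_of_not_dvd_orderOf {p : ℕ} [hp : Fact p.Prime] {G H : Type*} [Group G]
    [Finite G] [Group H] {f : G →* H} (hf : Function.Surjective f) {y : H}
    (hy : ¬ p ∣ orderOf y) : ∃ x, f x = y ∧ ¬ p ∣ orderOf x := by
  obtain ⟨x, rfl⟩ := hf y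
  set q := p ^ (orderOf x).factorization p
  obtain ⟨e, he⟩ := exists_pow_eq_self_of_coprime
    (.pow_left _ (hp.out.coprime_iff_not_dvd.2 hy) : q.Coprime _)
  refine ⟨(x ^ q) ^ e, by rw [map_pow, map_pow, he], fun hdvd => ?_⟩
  have hcompl : orderOf (x ^ q) ∣ orderOf x / q := by
    rw [orderOf_dvd_iff_pow_eq_one, ← pow_mul, Nat.mul_div_cancel' (Nat.ordProj_dvd _ _),
      pow_orderOf_eq_one]
  exact Nat.not_dvd_ordCompl hp.out (orderOf_pos x).ne'
    (hdvd.trans ((orderOf_pow_dvd e).trans hcompl))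

theorem QuotientGroup.exists_mk_eq_of_inv_mul_mul_eq_pow {p : ℕ} [Fact p.Prime] {G : Type*}
    [Group G] [Finite G] {N : Subgroup G} [N.Normal] (hN : IsPGroup p N) {σ' τ' : G ⧸ N}
    (hrel : σ'⁻¹ * τ' * σ' = τ' ^ p) :
    ∃ σ τ : G, (σ : G ⧸ N) = σ' ∧ (τ : G ⧸ N) = τ' ∧ σ⁻¹ * τ * σ = τ ^ p := by
  obtain ⟨τ, rfl, hτ⟩ := exists_apply_eq_of_not_dvd_orderOf (QuotientGroup.mk'_surjective N)
    (not_dvd_orderOf_of_inv_mul_mul_eq_pow hrel)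
  obtain ⟨σ₀, rfl⟩ := QuotientGroup.mk'_surjective N σ'
  have hcong : τ ^ p * (σ₀⁻¹ * τ * σ₀)⁻¹ ∈ N := by
    rw [← QuotientGroup.eq_one_iff, QuotientGroup.mk_mul, QuotientGroup.mk_inv, mul_inv_eq_one]
    exact hrel.symm
  obtain ⟨w, hw, hconj⟩ := hN.exists_conj_eq_of_mul_inv_mem hcong
    (by rwa [orderOf_inv_mul_mul])
    (fun h => hτ (h.trans (orderOf_pow_dvd p)))
  refine ⟨σ₀ * w⁻¹, τ, ?_, rfl, ?_⟩
  · simp [(QuotientGroup.eq_one_iff w).2 hw]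
  · rw [← hconj]; group

section PCore

variable {p : ℕ} {G : Type*} [Group G]

theorem pCore_isPGroup : IsPGroup p (pCore p G) := by
  obtain ⟨P⟩ : Nonempty (Sylow p G) := inferInstance
  exact P.isPGroup'.to_le (iInf_le _ P)

theorem le_pCore {N : Subgroup G} [N.Normal] (hN : IsPGroup p N) : N ≤ pCore p G :=
  le_iInf hN.le_sylow_of_normal

theorem pFrattini_le_pCore : pFrattini p G ≤ pCore p G := by
  refine sup_le ?_ (Subgroup.commutator_le_left _ _)
  rw [Subgroup.closure_le]
  rintro _ ⟨v, hv, rfl⟩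
  exact (pCore p G).pow_mem hv p

variable {N : Subgroup G} [N.Normal]

theorem pCore_quotient (hN : N ≤ pCore p G) :
    pCore p (G ⧸ N) = (pCore p G).map (QuotientGroup.mk' N) := by
  set f := QuotientGroup.mk' N
  refine le_antisymm ?_ (le_pCore (pCore_isPGroup.map f))
  have hker : IsPGroup p f.ker := by
    rw [QuotientGroup.ker_mk']
    exact pCore_isPGroup.to_le hN
  calc pCore p (G ⧸ N) = ((pCore p (G ⧸ N)).comap f).map f :=
        (Subgroup.map_comap_eq_self_of_surjective (QuotientGroup.mk'_surjective N) _).symm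
    _ ≤ (pCore p G).map f :=
        Subgroup.map_mono (le_pCore (pCore_isPGroup.comap_of_ker_isPGroup f hker))

theorem pFrattini_quotient (hN : N ≤ pCore p G) :
    pFrattini p (G ⧸ N) = (pFrattini p G).map (QuotientGroup.mk' N) := by
  rw [pFrattini, pFrattini, pCore_quotient hN, Subgroup.map_sup, Subgroup.map_commutator,
    MonoidHom.map_closure, Subgroup.coe_map, Set.image_image, Set.image_image]
  simp only [map_pow]

theorem pFrattini_quotient_pFrattini : pFrattini p (G ⧸ pFrattini p G) = ⊥ := by
  rw [pFrattini_quotient pFrattini_le_pCore, QuotientGroup.map_mk'_self]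

theorem closure_pair_sup_pCore_quotient_eq_top_iff (hN : N ≤ pCore p G) (σ τ : G) :
    Subgroup.closure {(σ : G ⧸ N), (τ : G ⧸ N)} ⊔ pCore p (G ⧸ N) = ⊤ ↔
      Subgroup.closure {σ, τ} ⊔ pCore p G = ⊤ := by
  have hker : (QuotientGroup.mk' N).ker ≤ Subgroup.closure {σ, τ} ⊔ pCore p G := by
    rw [QuotientGroup.ker_mk']
    exact hN.trans le_sup_right
  have hclosure : Subgroup.closure {(σ : G ⧸ N), (τ : G ⧸ N)} =
      (Subgroup.closure {σ, τ}).map (QuotientGroup.mk' N) := by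
    rw [MonoidHom.map_closure, Set.image_pair]
    rfl
  rw [hclosure, pCore_quotient hN, ← Subgroup.map_sup,
    ← Subgroup.map_top_of_surjective _ (QuotientGroup.mk'_surjective N)]
  exact ⟨Subgroup.map_injective_of_ker_le _ hker le_top, congrArg _⟩

end PCore

theorem map_tameBracket {G H : Type*} [Group G] [Group H] (f : G →* H) (p : ℕ) (h a : ℤ)
    (x y : G) : f (tameBracket p h a x y) = tameBracket p h a (f x) (f y) := by
  simp only [tameBracket, map_zpow, map_list_prod, List.map_map, Function.comp_def, map_mul]

section MemTG

variable {p : ℕ} {G : Type*} [Group G] {N : Subgroup G} [N.Normal]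

theorem MemTG.quotient (hN : N ≤ pCore p G) {σ τ : G} (hστ : MemTG p σ τ) :
    MemTG p (σ : G ⧸ N) τ :=
  ⟨by rw [← QuotientGroup.mk_inv, ← QuotientGroup.mk_mul, ← QuotientGroup.mk_mul, hστ.1,
      QuotientGroup.mk_pow],
    (closure_pair_sup_pCore_quotient_eq_top_iff hN σ τ).2 hστ.2⟩

theorem exists_memTG_mk_eq [Fact p.Prime] [Finite G] (hN : N ≤ pCore p G) {σ' τ' : G ⧸ N}
    (h : MemTG p σ' τ') : ∃ σ τ : G, MemTG p σ τ ∧ (σ : G ⧸ N) = σ' ∧ (τ : G ⧸ N) = τ' := by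
  obtain ⟨σ, τ, rfl, rfl, hrel⟩ :=
    QuotientGroup.exists_mk_eq_of_inv_mul_mul_eq_pow (pCore_isPGroup.to_le hN) h.1
  exact ⟨σ, τ, ⟨hrel, (closure_pair_sup_pCore_quotient_eq_top_iff hN σ τ).1 h.2⟩, rfl, rfl⟩

end MemTG

theorem xConstrained_iff_quotient_general (p : ℕ) [Fact p.Prime]
    (G : Type*) [Group G] [Finite G]
    (h a : ℤ) :
    IsXConstrained p h a G ↔ IsXConstrained p h a (G ⧸ pFrattini p G) := by
  have hW : pFrattini p G ≤ pCore p G := pFrattini_le_pCore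
  have hdefect (σ τ x₀ : G) :
      ((σ⁻¹ * x₀ * σ * (tameBracket p h a x₀ τ)⁻¹ : G) : G ⧸ pFrattini p G) =
        (σ : G ⧸ pFrattini p G)⁻¹ * x₀ * σ * (tameBracket p h a (x₀ : G ⧸ pFrattini p G) τ)⁻¹ := by
    simp only [← QuotientGroup.mk'_apply, map_mul, map_inv, map_tameBracket]
  simp only [IsXConstrained, pFrattini_quotient_pFrattini, Subgroup.mem_bot, pCore_quotient hW,
    Subgroup.mem_map, QuotientGroup.mk'_apply]
  constructor
  · rintro hG _ _ hT _ ⟨x₀, hx₀, rfl⟩ hdef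
    obtain ⟨σ, τ, hστ, rfl, rfl⟩ := exists_memTG_mk_eq hW hT
    rw [← hdefect, QuotientGroup.eq_one_iff] at hdef
    exact (QuotientGroup.eq_one_iff _).2 (hG σ τ hστ x₀ hx₀ hdef)
  · intro hQ σ τ hστ x₀ hx₀ hdef
    refine (QuotientGroup.eq_one_iff _).1 (hQ σ τ (hστ.quotient hW) x₀ ⟨x₀, hx₀, rfl⟩ ?_)
    rw [← hdefect, QuotientGroup.eq_one_iff]
    exact hdef

/-- `G` is `x₀`-constrained if and only if `G/W` is `x₀`-constrained. -/
theorem xConstrained_iff_quotient (p : ℕ) [Fact p.Prime] (hodd : Odd p)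
    (G : Type*) [Group G] [Finite G] (u r : ℕ)
    (hcard : Nat.card G = u * p ^ r) (hu : ¬ p ∣ u)
    (h a : ℤ)
    (ha0 : a ≡ 0 [ZMOD (u : ℤ)])
    (ha1 : ((p : ℤ) - 1) * a ≡ 1 [ZMOD ((p : ℤ) ^ r)])
    (hh : h ^ (p - 1) ≡ 1 [ZMOD ((p : ℤ) ^ r)])
    (hord : orderOf (h : ZMod p) = p - 1) :
    IsXConstrained p h a G ↔ IsXConstrained p h a (G ⧸ pFrattini p G) :=
  xConstrained_iff_quotient_general p G h a
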